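/- Let δ** = (260 − 8√10)/279. Then max_{x∈[0,1]} [ (1−x)·(x − δ** x²/4 − 1/2) + δ** x³/12 ] = 2/27; that is, at the discount factor δ** the maximal dynamic-mechanism profit equals the maximal ex-ante at-will posted-price profit 2/27 = max_{p∈[0,1]} (1−p)p²/2 of the uniform example. -/
import Mathlib


/-- Seller's ex-ante expected profit from the dynamic mechanism with time-0 acceptance
threshold `x` in the uniform example: `h_δ(x) = (1−x)(x − δx²/4 − 1/2) + δx³/12`. -/
noncomputable def hDyn (δ x : ℝ) : ℝ := (1 - x) * (x - δ * x^2 / 4 - 1/2) + δ * x^3 / 12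

/-- The threshold discount factor `δ** = (260 − 8√10)/279` of the uniform example. -/
noncomputable def δss : ℝ := (260 - 8 * Real.sqrt 10) / 279

/-- at `δ** = (260 − 8√10)/279`, the maximal dynamic-mechanism profit
`max_{x∈[0,1]} h_{δ**}(x)` equals `2/27`, which is also the maximal ex-ante at-will
posted-price profit `max_{p∈[0,1]} (1−p)p²/2` of the uniform example. -/
theorem stmt17 :
    IsGreatest ((fun x => hDyn δss x) '' Set.Icc (0:ℝ) 1) (2/27) ∧
    IsGreatest ((fun p => (1 - p) * p^2 / 2) '' Set.Icc (0:ℝ) 1) (2/27) := by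
  have hs2 : Real.sqrt 10 ^ 2 = 10 := Real.sq_sqrt (by norm_num)
  have hs3 : (3:ℝ) ≤ Real.sqrt 10 := by
    nlinarith [Real.sq_sqrt (show (0:ℝ) ≤ 10 by norm_num), Real.sqrt_nonneg 10]
  have hs4 : Real.sqrt 10 ≤ 4 := by
    nlinarith [Real.sq_sqrt (show (0:ℝ) ≤ 10 by norm_num), Real.sqrt_nonneg 10]
  constructor
  · constructor
    · refine ⟨(14 - Real.sqrt 10) / 12, ⟨by nlinarith, by nlinarith⟩, ?_⟩
      simp only [hDyn, δss]
      field_simp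
      nlinarith [hs2, sq_nonneg (Real.sqrt 10)]
    · rintro y ⟨x, ⟨hx0, hx1⟩, rfl⟩
      simp only [hDyn, δss]
      nlinarith [sq_nonneg (x - (14 - Real.sqrt 10) / 12), hs2, hs3, hs4,
        mul_nonneg (mul_nonneg (sub_nonneg.2 hx1) (sub_nonneg.2 hx1)) hx0,
        mul_nonneg hx0 hx0, sq_nonneg x,
        mul_nonneg (mul_nonneg hx0 hx0) (sub_nonneg.2 hx1),
        mul_nonneg (sub_nonneg.2 hs3) (sq_nonneg (x - (14 - Real.sqrt 10) / 12)),
        mul_nonneg (sub_nonneg.2 hx1) (sq_nonneg (x - (14 - Real.sqrt 10) / 12))]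
  · constructor
    · exact ⟨2/3, ⟨by norm_num, by norm_num⟩, by norm_num⟩
    · rintro y ⟨p, ⟨hp0, hp1⟩, rfl⟩
      nlinarith [sq_nonneg (p - 2/3), mul_nonneg hp0 (sq_nonneg (p - 2/3))]
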